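/- Let c(n) be the coefficient of X^n in the formal power series X(1 − 7X + 20X² − 26X³ + 11X⁴)/((1 − X)(1 − 3X + X²)³) over ℝ, and let α = (1 + √5)/2. Then c(n)/(n²·α^{2n}) converges, as n → ∞, to (7 − 3√5)/20. (This series is the generating function, by size, of the total number of descendants summed over all nodes of all Elena trees; hence the average number of descendants of a node in a random Elena tree with n nodes is asymptotic to (5 − √5)n/20.) -/

import Mathlib

/-!
Since `1 - 3X + X² = (1 - φ²X)(1 - ψ²X)`, the denominator is `(1 - X)(1 - φ²X)³(1 - ψ²X)³`, and
partial fractions give the closed form `c(n) = 1 + p(φ, n) φ²ⁿ + p(ψ, n) ψ²ⁿ` with `p(x, ·)` a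
quadratic of leading coefficient `(5 - 3x)/10`. As `|ψ| < 1 < φ`, after division by `n² φ²ⁿ` only
the leading coefficient `(5 - 3φ)/10 = (7 - 3√5)/20` survives.
-/

open PowerSeries
open scoped goldenRatio

namespace PowerSeries

theorem mk_quadratic_mul_geom_mul_one_sub_C_mul_X_pow_three {R : Type*} [CommRing R] (a b c w : R) :
    mk (fun n : ℕ => (a * n ^ 2 + b * n + c) * w ^ n) * (1 - C w * X) ^ 3 =
      C c + C ((a + b - 2 * c) * w) * X + C ((a - b + c) * w ^ 2) * X ^ 2 := by
  set f : R⟦X⟧ := mk fun n : ℕ => (a * n ^ 2 + b * n + c) * w ^ n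
  have hexpand : f * (1 - C w * X) ^ 3 =
      f - C (3 * w) * (f * X ^ 1) + C (3 * w ^ 2) * (f * X ^ 2) - C (w ^ 3) * (f * X ^ 3) := by
    simp only [map_mul, map_pow, map_ofNat]; ring
  rw [hexpand]
  ext (_ | _ | _ | n) <;>
    simp only [f, map_add, map_sub, coeff_C_mul, coeff_mul_X_pow', coeff_mk, coeff_C, coeff_X] <;>
    grind

end PowerSeries

noncomputable def descendantSeries : ℝ⟦X⟧ :=
  X * (1 - 7 * X + 20 * X ^ 2 - 26 * X ^ 3 + 11 * X ^ 4) *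
    ((1 - X) * (1 - 3 * X + X ^ 2) ^ 3)⁻¹

noncomputable def rootWeight (x : ℝ) (n : ℕ) : ℝ :=
  (5 - 3 * x) / 10 * n ^ 2 + (13 - x) / 50 * n + (x - 3) / 5

theorem one_sub_three_mul_X_add_X_sq :
    (1 - 3 * X + X ^ 2 : ℝ⟦X⟧) = (1 - C (φ ^ 2) * X) * (1 - C (ψ ^ 2) * X) := by
  have hsum : φ ^ 2 + ψ ^ 2 = 3 := by
    rw [Real.goldenRatio_sq, Real.goldenConj_sq]; linarith [Real.goldenRatio_add_goldenConj]
  have hprod : φ ^ 2 * ψ ^ 2 = 1 := by rw [← mul_pow, Real.goldenRatio_mul_goldenConj]; norm_num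
  have hsumC : C (φ ^ 2) + C (ψ ^ 2) = (3 : ℝ⟦X⟧) := by rw [← map_add, hsum, map_ofNat]
  have hprodC : C (φ ^ 2) * C (ψ ^ 2) = (1 : ℝ⟦X⟧) := by rw [← map_mul, hprod, map_one]
  linear_combination X * hsumC - X ^ 2 * hprodC

noncomputable def rootNumerator (x : ℝ) : ℝ⟦X⟧ :=
  C ((x - 3) / 5) + C (((5 - 3 * x) / 10 + (13 - x) / 50 - 2 * ((x - 3) / 5)) * x ^ 2) * X +
    C (((5 - 3 * x) / 10 - (13 - x) / 50 + (x - 3) / 5) * (x ^ 2) ^ 2) * X ^ 2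

theorem mk_rootWeight_mul_pow_three (x : ℝ) :
    mk (fun n => rootWeight x n * x ^ (2 * n)) * (1 - C (x ^ 2) * X) ^ 3 = rootNumerator x := by
  rw [rootNumerator]
  simpa only [rootWeight, pow_mul] using
    mk_quadratic_mul_geom_mul_one_sub_C_mul_X_pow_three _ _ _ (x ^ 2)

theorem numerator_eq_partial_fractions {x y : ℝ} (hx : x ^ 2 = x + 1) (hxy : x + y = 1) :
    (X * (1 - 7 * X + 20 * X ^ 2 - 26 * X ^ 3 + 11 * X ^ 4) : ℝ⟦X⟧) =
      (1 - C (x ^ 2) * X) ^ 3 * (1 - C (y ^ 2) * X) ^ 3 +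
        (1 - X) * (1 - C (y ^ 2) * X) ^ 3 * rootNumerator x +
        (1 - X) * (1 - C (x ^ 2) * X) ^ 3 * rootNumerator y := by
  obtain rfl : y = 1 - x := by linear_combination hxy
  simp only [rootNumerator, ← map_ofNat (C (R := ℝ)), ← Polynomial.coe_X, ← Polynomial.coe_C,
    ← Polynomial.coe_one, ← Polynomial.coe_pow, ← Polynomial.coe_mul, ← Polynomial.coe_add,
    ← Polynomial.coe_sub, Polynomial.coe_inj]
  refine Polynomial.funext fun r => ?_
  simp only [Polynomial.eval_add, Polynomial.eval_sub, Polynomial.eval_mul, Polynomial.eval_pow,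
    Polynomial.eval_C, Polynomial.eval_X, Polynomial.eval_one]
  -- a polynomial identity in `r` and `x` modulo `x ^ 2 = x + 1`, which `grind`'s ring solver uses
  grind

theorem mk_closedForm_mul_denominator :
    mk (fun n : ℕ => 1 + rootWeight φ n * φ ^ (2 * n) + rootWeight ψ n * ψ ^ (2 * n)) *
        ((1 - X) * (1 - 3 * X + X ^ 2) ^ 3) =
      X * (1 - 7 * X + 20 * X ^ 2 - 26 * X ^ 3 + 11 * X ^ 4) := by
  have hsplit : mk (fun n : ℕ => 1 + rootWeight φ n * φ ^ (2 * n) + rootWeight ψ n * ψ ^ (2 * n)) =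
      mk (1 : ℕ → ℝ) + mk (fun n => rootWeight φ n * φ ^ (2 * n)) +
        mk (fun n => rootWeight ψ n * ψ ^ (2 * n)) := by
    ext n; simp only [coeff_mk, map_add, Pi.one_apply]
  have hpf := numerator_eq_partial_fractions Real.goldenRatio_sq Real.goldenRatio_add_goldenConj
  rw [hsplit, one_sub_three_mul_X_add_X_sq]
  linear_combination
    ((1 - C (φ ^ 2) * X) * (1 - C (ψ ^ 2) * X)) ^ 3 * mk_one_mul_one_sub_eq_one ℝ
    + (1 - X) * (1 - C (ψ ^ 2) * X) ^ 3 * mk_rootWeight_mul_pow_three φ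
    + (1 - X) * (1 - C (φ ^ 2) * X) ^ 3 * mk_rootWeight_mul_pow_three ψ - hpf

theorem coeff_descendantSeries (n : ℕ) :
    coeff n descendantSeries = 1 + rootWeight φ n * φ ^ (2 * n) + rootWeight ψ n * ψ ^ (2 * n) := by
  have hD : constantCoeff ((1 - X) * (1 - 3 * X + X ^ 2) ^ 3 : ℝ⟦X⟧) ≠ 0 := by simp
  rw [descendantSeries, ← mk_closedForm_mul_denominator, mul_assoc,
    PowerSeries.mul_inv_cancel _ hD, mul_one, coeff_mk]

open Filter Topology

theorem tendsto_quadratic_div_sq (a b c : ℝ) :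
    Tendsto (fun n : ℕ => (a * n ^ 2 + b * n + c) / n ^ 2) atTop (𝓝 a) := by
  have hinv := tendsto_one_div_atTop_nhds_zero_nat (𝕜 := ℝ)
  have hlim : Tendsto (fun n : ℕ => a + b * (1 / n) + c * (1 / n) ^ 2) atTop
      (𝓝 (a + b * 0 + c * 0 ^ 2)) :=
    (tendsto_const_nhds.add (hinv.const_mul b)).add ((hinv.pow 2).const_mul c)
  rw [mul_zero, zero_pow two_ne_zero, mul_zero, add_zero, add_zero] at hlim
  refine hlim.congr' ?_
  filter_upwards [eventually_ne_atTop 0] with n hn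
  field_simp

theorem tendsto_rootWeight_div_sq (x : ℝ) :
    Tendsto (fun n : ℕ => rootWeight x n / n ^ 2) atTop (𝓝 ((5 - 3 * x) / 10)) :=
  tendsto_quadratic_div_sq _ _ _

theorem one_add_mul_pow_add_mul_pow_div {u : ℝ} (hu : u ≠ 0) (A B v m : ℝ) (n : ℕ) :
    (1 + A * u ^ n + B * v ^ n) / (m ^ 2 * u ^ n) =
      (1 / m) ^ 2 * u⁻¹ ^ n + A / m ^ 2 + B / m ^ 2 * (v / u) ^ n := by
  rcases eq_or_ne m 0 with rfl | hm
  · simp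
  · have hun : u ^ n ≠ 0 := pow_ne_zero n hu
    rw [inv_pow, div_pow v]
    field_simp

/-- Let `c(n)` be the coefficient of `Xⁿ` in
`X(1 − 7X + 20X² − 26X³ + 11X⁴)/((1 − X)(1 − 3X + X²)³)` over `ℝ` and
`α = (1 + √5)/2`.  Then `c(n)/(n²·α^(2n)) → (7 − 3√5)/20`. -/
theorem avg_num_descendants :
    Filter.Tendsto
      (fun n : ℕ =>
        PowerSeries.coeff (R := ℝ) n
            (PowerSeries.X *
              (1 - 7 * PowerSeries.X + 20 * PowerSeries.X ^ 2 -
                26 * PowerSeries.X ^ 3 + 11 * PowerSeries.X ^ 4) *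
              (((1 : PowerSeries ℝ) - PowerSeries.X) *
                (1 - 3 * PowerSeries.X + PowerSeries.X ^ 2) ^ 3)⁻¹) /
          ((n : ℝ) ^ 2 * ((1 + Real.sqrt 5) / 2) ^ (2 * n)))
      Filter.atTop (nhds ((7 - 3 * Real.sqrt 5) / 20)) := by
  change Tendsto (fun n : ℕ => coeff n descendantSeries / ((n : ℝ) ^ 2 * φ ^ (2 * n))) atTop
    (𝓝 ((7 - 3 * √5) / 20))
  have hdom : ψ ^ 2 / φ ^ 2 < 1 := by
    rw [div_lt_one (by positivity)]
    nlinarith [Real.neg_one_lt_goldenConj, Real.goldenConj_neg, Real.one_lt_goldenRatio]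
  have hlim := ((((tendsto_one_div_atTop_nhds_zero_nat (𝕜 := ℝ)).pow 2).mul
      (tendsto_pow_atTop_nhds_zero_of_lt_one (by positivity)
        (inv_lt_one_of_one_lt₀ (one_lt_pow₀ Real.one_lt_goldenRatio two_ne_zero)))).add
      (tendsto_rootWeight_div_sq φ)).add
    ((tendsto_rootWeight_div_sq ψ).mul (tendsto_pow_atTop_nhds_zero_of_lt_one (by positivity) hdom))
  rw [show (0 : ℝ) ^ 2 * 0 + (5 - 3 * φ) / 10 + (5 - 3 * ψ) / 10 * 0 = (7 - 3 * √5) / 20 by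
    rw [Real.goldenRatio]; ring] at hlim
  refine hlim.congr fun n => ?_
  rw [coeff_descendantSeries, pow_mul, pow_mul,
    one_add_mul_pow_add_mul_pow_div (pow_ne_zero 2 Real.goldenRatio_ne_zero)]
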